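/- Let N ≥ 1 and α > 0, and let u₀ ∈ L¹(ℝ^N) ∩ L²(ℝ^N) be real-valued with ∫_{ℝ^N} u₀(x) dx > 0. Define û₀(ω) = (2π)^{-N/2} ∫_{ℝ^N} u₀(x) e^{-i ω·x} dx and u(t,x) = (2π)^{-N/2} ∫_{ℝ^N} e^{-t|ω|^{2α}} û₀(ω) e^{i ω·x} dω for t > 0. Then for every compact set K ⊆ ℝ^N there exists T ≥ 0 (depending on u₀ and K) such that the real part of u(t,x) is strictly positive for all (t,x) ∈ [T,∞) × K. (Since u₀ is real-valued, u(t,x) is real, so this says the solution itself is positive on [T,∞) × K.) -/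

import Mathlib

open MeasureTheory Filter Real Complex
open Topology Function

/-! Substituting `ω = h • η` with `h = t ^ (-1/(2α))` gives
`u(t,x) = (2π)^(-N/2) h^N ∫ exp(-‖η‖^(2α)) û₀(h η) exp(i⟨h η, x⟩) dη`.
Since `û₀` is continuous and bounded by `(2π)^(-N/2) ‖u₀‖₁`, dominated convergence makes this
integral jointly continuous in `(h, x)`, and at `h = 0` it equals
`û₀(0) ∫ exp(-‖η‖^(2α)) = (2π)^(-N/2) (∫ u₀) ∫ exp(-‖η‖^(2α)) > 0`.
By compactness of `K` its real part stays positive on `K` for all small `h`, i.e. all large `t`.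
-/

section

variable {E : Type*} [NormedAddCommGroup E] [NormedSpace ℝ E] [FiniteDimensional ℝ E]
  [MeasurableSpace E] [BorelSpace E] (μ : Measure E) [μ.IsAddHaarMeasure]

theorem integrable_exp_neg_norm_rpow {p : ℝ} (hp : 0 < p) :
    Integrable (fun x : E => Real.exp (-‖x‖ ^ p)) μ := by
  cases subsingleton_or_nontrivial E
  · refine Continuous.integrable_of_hasCompactSupport ?_ (.of_compactSpace _)
    exact Real.continuous_exp.comp ((continuous_norm.rpow_const fun _ => Or.inr hp.le).neg)
  · refine (integrable_fun_norm_addHaar μ (f := fun y => Real.exp (-y ^ p))).2 ?_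
    refine (integrableOn_rpow_mul_exp_neg_rpow (s := (Module.finrank ℝ E - 1 : ℕ))
      (neg_one_lt_zero.trans_le (Nat.cast_nonneg _)) hp).congr_fun
      (fun y _ => ?_) measurableSet_Ioi
    simp [Real.rpow_natCast]

theorem integral_exp_neg_mul_norm_rpow_smul {F : Type*} [NormedAddCommGroup F] [NormedSpace ℝ F]
    {p t : ℝ} (hp : 0 < p) (ht : 0 < t) (φ : E → F) :
    ∫ ω, Real.exp (-(t * ‖ω‖ ^ p)) • φ ω ∂μ
      = (t ^ (-p⁻¹)) ^ Module.finrank ℝ E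
          • ∫ η, Real.exp (-‖η‖ ^ p) • φ (t ^ (-p⁻¹) • η) ∂μ := by
  set h := t ^ (-p⁻¹)
  have hh : 0 < h := Real.rpow_pos_of_pos ht _
  have hscale : ∀ η : E, t * ‖h • η‖ ^ p = ‖η‖ ^ p := fun η => by
    rw [norm_smul, Real.norm_of_nonneg hh.le, Real.mul_rpow hh.le (norm_nonneg η),
      ← Real.rpow_mul ht.le, neg_mul, inv_mul_cancel₀ hp.ne', Real.rpow_neg_one, ← mul_assoc,
      mul_inv_cancel₀ ht.ne', one_mul]
  have hsubst : ∫ η, Real.exp (-‖η‖ ^ p) • φ (h • η) ∂μ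
      = ∫ η, Real.exp (-(t * ‖h • η‖ ^ p)) • φ (h • η) ∂μ := by
    simp only [hscale]
  rw [hsubst, Measure.integral_comp_smul_of_nonneg μ
    (fun ω => Real.exp (-(t * ‖ω‖ ^ p)) • φ ω) h (hR := hh.le), smul_inv_smul₀ (by positivity)]

end

section

variable {E F X : Type*} [MeasurableSpace E] [TopologicalSpace E] [OpensMeasurableSpace E]
  [NormedAddCommGroup F] [NormedSpace ℝ F] [SecondCountableTopologyEither E F]
  [TopologicalSpace X] [FirstCountableTopology X] {μ : Measure E}

theorem continuous_integral_smul_of_bounded {w : E → ℝ} (hw : Integrable w μ) {G : X → E → F}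
    (hG : Continuous (uncurry G)) {C : ℝ} (hC : ∀ x η, ‖G x η‖ ≤ C) :
    Continuous fun x => ∫ η, w η • G x η ∂μ := by
  refine continuous_of_dominated (bound := fun η => ‖w η‖ * C)
    (fun x => hw.aestronglyMeasurable.smul
      (hG.comp (Continuous.prodMk_right x)).aestronglyMeasurable)
    (fun x => ae_of_all _ fun η => ?_) (hw.norm.mul_const C)
    (ae_of_all _ fun η => continuous_const.smul (hG.comp (Continuous.prodMk_left η)))
  rw [norm_smul]
  exact mul_le_mul_of_nonneg_left (hC x η) (norm_nonneg _)

end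

section

variable {E Y : Type*} [NormedAddCommGroup E] [NormedSpace ℝ E] [MeasurableSpace E]
  [OpensMeasurableSpace E] [TopologicalSpace Y] [FirstCountableTopology Y]
  {μ : Measure E}

theorem eventually_forall_re_integral_smul_comp_smul_pos {w : E → ℝ} (hw : Integrable w μ)
    (hw_pos : 0 < ∫ η, w η ∂μ) {F : E → Y → ℂ} (hF : Continuous (uncurry F)) {C : ℝ}
    (hC : ∀ ω y, ‖F ω y‖ ≤ C) {K : Set Y} (hK : IsCompact K) (hF0 : ∀ y ∈ K, 0 < (F 0 y).re) :
    ∀ᶠ h in 𝓝 (0 : ℝ), ∀ y ∈ K, 0 < (∫ η, w η • F (h • η) y ∂μ).re := by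
  have hcont : Continuous fun z : ℝ × Y => ∫ η, w η • F (z.1 • η) z.2 ∂μ :=
    continuous_integral_smul_of_bounded hw
      (hF.comp ((continuous_fst.fst.smul continuous_snd).prodMk continuous_fst.snd))
      (fun _ _ => hC _ _)
  refine hK.eventually_forall_of_forall_eventually fun y hy => ?_
  have hpos : 0 < (∫ η, w η • F ((0 : ℝ) • η) y ∂μ).re := by
    simp only [zero_smul, integral_smul_const, Complex.smul_re, smul_eq_mul]
    exact mul_pos hw_pos (hF0 y hy)
  exact continuousAt_const.eventually_lt (Complex.continuous_re.comp hcont).continuousAt hpos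

end

section

variable {E : Type*} [NormedAddCommGroup E] [InnerProductSpace ℝ E] [MeasurableSpace E]
  {μ : Measure E} {f : E → ℝ}

theorem continuous_integral_mul_cexp_neg_inner [OpensMeasurableSpace E] (hf : Integrable f μ) :
    Continuous fun ω : E => ∫ x, (f x : ℂ) * cexp (-(I * ((inner ℝ ω x : ℝ) : ℂ))) ∂μ := by
  simp_rw [← Complex.real_smul]
  refine continuous_integral_smul_of_bounded hf (C := 1) ?_ fun _ _ => by simp [Complex.norm_exp]
  fun_prop

theorem norm_integral_mul_cexp_neg_inner_le (hf : Integrable f μ) (ω : E) :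
    ‖∫ x, (f x : ℂ) * cexp (-(I * ((inner ℝ ω x : ℝ) : ℂ))) ∂μ‖ ≤ ∫ x, ‖f x‖ ∂μ :=
  norm_integral_le_of_norm_le hf.norm (ae_of_all _ fun x => by simp [Complex.norm_exp])

end

theorem fractional_heat_local_eventual_positivity_general
    (N : ℕ) (α : ℝ) (hα : 0 < α)
    (u₀ : EuclideanSpace ℝ (Fin N) → ℝ)
    (hu₀L1 : Integrable u₀)
    (hmass : 0 < ∫ x, u₀ x)
    (u0hat : EuclideanSpace ℝ (Fin N) → ℂ)
    (hu0hat : ∀ ω, u0hat ω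
      = (((2 * π) ^ (-(N : ℝ) / 2) : ℝ) : ℂ)
        * ∫ x, (u₀ x : ℂ) * Complex.exp (-(Complex.I * ((inner ℝ ω x : ℝ) : ℂ))))
    (u : ℝ → EuclideanSpace ℝ (Fin N) → ℂ)
    (hu : ∀ t, 0 < t → ∀ x, u t x
      = (((2 * π) ^ (-(N : ℝ) / 2) : ℝ) : ℂ)
        * ∫ ω, (Real.exp (-(t * ‖ω‖ ^ (2 * α))) : ℂ) * u0hat ω
            * Complex.exp (Complex.I * ((inner ℝ ω x : ℝ) : ℂ)))
    (K : Set (EuclideanSpace ℝ (Fin N))) (hK : IsCompact K) :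
    ∃ T : ℝ, 0 ≤ T ∧ ∀ t, T ≤ t → ∀ x ∈ K, 0 < (u t x).re := by
  set c : ℝ := (2 * π) ^ (-(N : ℝ) / 2)
  have hc : 0 < c := by positivity
  have hβ : 0 < 2 * α := by positivity
  have hû : Continuous u0hat := by
    rw [funext hu0hat]
    exact continuous_const.mul (continuous_integral_mul_cexp_neg_inner hu₀L1)
  have hû_le : ∀ ω, ‖u0hat ω‖ ≤ c * ∫ y, ‖u₀ y‖ := fun ω => by
    rw [hu0hat, norm_mul, Complex.norm_real, Real.norm_of_nonneg hc.le]
    exact mul_le_mul_of_nonneg_left (norm_integral_mul_cexp_neg_inner_le hu₀L1 ω) hc.le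
  have hû0 : 0 < (u0hat 0).re := by
    simpa [hu0hat, integral_complex_ofReal] using mul_pos hc hmass
  set F := fun ω x => u0hat ω * cexp (I * ((inner ℝ ω x : ℝ) : ℂ))
  have hF : Continuous (uncurry F) := by
    change Continuous fun z : _ × _ => u0hat z.1 * cexp (I * ((inner ℝ z.1 z.2 : ℝ) : ℂ))
    fun_prop
  have hw := integrable_exp_neg_norm_rpow (volume : Measure (EuclideanSpace ℝ (Fin N))) hβ
  have hev := eventually_forall_re_integral_smul_comp_smul_pos hw (integral_exp_pos hw) hF
    (C := c * ∫ y, ‖u₀ y‖) (fun ω x => by simpa [F, Complex.norm_exp] using hû_le ω) hK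
    (fun x _ => by simpa [F] using hû0)
  obtain ⟨T, hT⟩ := eventually_atTop.1 <|
    ((tendsto_rpow_neg_atTop (inv_pos.2 hβ)).eventually hev).and (eventually_gt_atTop 0)
  refine ⟨max T 0, le_max_right _ _, fun t ht x hx => ?_⟩
  obtain ⟨hpos, ht0⟩ := hT t (le_of_max_le_left ht)
  have hscale := integral_exp_neg_mul_norm_rpow_smul volume hβ ht0 (F · x)
  simp_rw [mul_assoc, ← Complex.real_smul] at hu
  rw [hu t ht0 x, hscale, Complex.smul_re, Complex.smul_re, smul_eq_mul, smul_eq_mul]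
  exact mul_pos hc (mul_pos (pow_pos (Real.rpow_pos_of_pos ht0 _) _) (hpos x hx))

/-- **Local eventual positivity of the fractional/polyharmonic heat equation on ℝ^N.**
If `u₀ ∈ L¹ ∩ L²(ℝ^N)` is real-valued with `∫ u₀ > 0`, then for every compact
`K ⊆ ℝ^N` there is a time `T ≥ 0` after which the solution of
`∂u/∂t + (-Δ)^α u = 0` is strictly positive on `K`. -/
theorem fractional_heat_local_eventual_positivity
    (N : ℕ) (hN : 1 ≤ N) (α : ℝ) (hα : 0 < α)
    (u₀ : EuclideanSpace ℝ (Fin N) → ℝ)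
    (hu₀L1 : Integrable u₀)
    (hu₀L2 : MemLp u₀ 2)
    (hmass : 0 < ∫ x, u₀ x)
    (u0hat : EuclideanSpace ℝ (Fin N) → ℂ)
    (hu0hat : ∀ ω, u0hat ω
      = (((2 * π) ^ (-(N : ℝ) / 2) : ℝ) : ℂ)
        * ∫ x, (u₀ x : ℂ) * Complex.exp (-(Complex.I * ((inner ℝ ω x : ℝ) : ℂ))))
    (u : ℝ → EuclideanSpace ℝ (Fin N) → ℂ)
    (hu : ∀ t, 0 < t → ∀ x, u t x
      = (((2 * π) ^ (-(N : ℝ) / 2) : ℝ) : ℂ)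
        * ∫ ω, (Real.exp (-(t * ‖ω‖ ^ (2 * α))) : ℂ) * u0hat ω
            * Complex.exp (Complex.I * ((inner ℝ ω x : ℝ) : ℂ)))
    (K : Set (EuclideanSpace ℝ (Fin N))) (hK : IsCompact K) :
    ∃ T : ℝ, 0 ≤ T ∧ ∀ t, T ≤ t → ∀ x ∈ K, 0 < (u t x).re :=
  fractional_heat_local_eventual_positivity_general N α hα u₀ hu₀L1 hmass u0hat hu0hat u hu K hK
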